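/- arXiv:0905.3668 — 2 statements merged into one kernel-verified Lean document; each statement's English description precedes it below -/
import Mathlib

section
/- Graded modal logic has the finite tree model property: every satisfiable GML formula is satisfied at the root of some finite tree model. -/
/-- A Kripke model with proposition letters from `A` and worlds `W`. -/
structure Kripke (A W : Type) where
  R : W → W → Prop
  V : A → W → Prop

/-- Formulas of graded modal logic: φ ::= p | ¬φ | φ∧ψ | ◇ₖφ. -/
inductive GML (A : Type) : Type where
  | atom : A → GML A
  | neg : GML A → GML A
  | and : GML A → GML A → GML A
  | dia : ℕ → GML A → GML A

/-- Semantics of GML: `dia k φ` holds at `w` iff at least `k` distinct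
`R`-successors of `w` satisfy `φ`. -/
def gsat {A W : Type} (M : Kripke A W) : W → GML A → Prop
  | w, .atom p => M.V p w
  | w, .neg φ => ¬ gsat M w φ
  | w, .and φ ψ => gsat M w φ ∧ gsat M w ψ
  | w, .dia k φ => ∃ f : Fin k → W, Function.Injective f ∧
      ∀ i, M.R w (f i) ∧ gsat M (f i) φ

/-- `M` is a tree model with root `r`. -/
def IsTree {A W : Type} (M : Kripke A W) (r : W) : Prop :=
  (∀ v, Relation.ReflTransGen M.R r v) ∧
  (∀ v, ¬ M.R v r) ∧
  (∀ u u' v, M.R u v → M.R u' v → u = u') ∧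
  (∀ v, ¬ Relation.TransGen M.R v v)


/-!
By induction on `n`, every pointed model `(M, w)` agrees on a subformula-closed finite set `Γ`
of formulas of modal depth `≤ n + 1` with the root of a finite tree. For each `◇ₖχ ∈ Γ` true at
`w`, pick `k` distinct successors witnessing it: finitely many successors `v` in all. Replace each
by a finite tree agreeing with `v` on the formulas of `Γ` of depth `≤ n`, and put these trees
under a fresh root carrying the valuation of `w`. The children of the root are in bijection with
the chosen successors, so the grades of `◇ₖχ` are counted correctly.
-/

namespace GML

variable {A : Type}

def depth : GML A → ℕ
  | .atom _ => 0
  | .neg φ => depth φ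
  | .and φ ψ => max (depth φ) (depth ψ)
  | .dia _ φ => depth φ + 1

def subformulas : GML A → List (GML A)
  | .atom p => [.atom p]
  | .neg φ => .neg φ :: subformulas φ
  | .and φ ψ => .and φ ψ :: (subformulas φ ++ subformulas ψ)
  | .dia k φ => .dia k φ :: subformulas φ

theorem mem_subformulas_self (φ : GML A) : φ ∈ φ.subformulas := by
  cases φ <;> simp [subformulas]

theorem subformulas_subset {φ ψ : GML A} (h : ψ ∈ φ.subformulas) :
    ψ.subformulas ⊆ φ.subformulas := by
  induction φ with
  | atom p => simp_all [subformulas]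
  | neg φ ih =>
    rcases List.mem_cons.mp h with rfl | h
    · exact List.Subset.refl _
    · exact List.Subset.trans (ih h) (List.subset_cons_self _ _)
  | and φ₁ φ₂ ih₁ ih₂ =>
    simp only [subformulas, List.mem_cons, List.mem_append] at h
    rcases h with rfl | h | h
    · exact List.Subset.refl _
    · exact List.Subset.trans (ih₁ h) fun _ h ↦ by simp [subformulas, h]
    · exact List.Subset.trans (ih₂ h) fun _ h ↦ by simp [subformulas, h]
  | dia k φ ih =>
    rcases List.mem_cons.mp h with rfl | h
    · exact List.Subset.refl _
    · exact List.Subset.trans (ih h) (List.subset_cons_self _ _)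

theorem depth_le_of_mem_subformulas {φ ψ : GML A} (h : ψ ∈ φ.subformulas) :
    ψ.depth ≤ φ.depth := by
  induction φ with
  | atom p => simp_all [subformulas]
  | neg φ ih =>
    rcases List.mem_cons.mp h with rfl | h
    · exact le_rfl
    · exact ih h
  | and φ₁ φ₂ ih₁ ih₂ =>
    simp only [subformulas, List.mem_cons, List.mem_append] at h
    rcases h with rfl | h | h
    · exact le_rfl
    · exact (ih₁ h).trans (le_max_left _ _)
    · exact (ih₂ h).trans (le_max_right _ _)
  | dia k φ ih =>
    rcases List.mem_cons.mp h with rfl | h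
    · exact le_rfl
    · exact (ih h).trans (Nat.le_succ _)

def SubformulaClosed (Γ : List (GML A)) : Prop :=
  ∀ ψ ∈ Γ, ψ.subformulas ⊆ Γ

theorem subformulaClosed_subformulas (φ : GML A) : SubformulaClosed φ.subformulas :=
  fun _ h ↦ subformulas_subset h

namespace SubformulaClosed

variable {Γ : List (GML A)}

theorem neg_mem (hΓ : SubformulaClosed Γ) {φ : GML A} (h : .neg φ ∈ Γ) : φ ∈ Γ :=
  hΓ _ h (by simp [subformulas, mem_subformulas_self])

theorem and_mem (hΓ : SubformulaClosed Γ) {φ ψ : GML A} (h : .and φ ψ ∈ Γ) :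
    φ ∈ Γ ∧ ψ ∈ Γ :=
  ⟨hΓ _ h (by simp [subformulas, mem_subformulas_self]),
    hΓ _ h (by simp [subformulas, mem_subformulas_self])⟩

theorem dia_mem (hΓ : SubformulaClosed Γ) {k : ℕ} {φ : GML A} (h : .dia k φ ∈ Γ) :
    φ ∈ Γ :=
  hΓ _ h (by simp [subformulas, mem_subformulas_self])

theorem filter_depth_le (hΓ : SubformulaClosed Γ) (n : ℕ) :
    SubformulaClosed (Γ.filter fun ψ ↦ ψ.depth ≤ n) := by
  intro ψ hψ χ hχ
  simp only [List.mem_filter, decide_eq_true_eq] at hψ ⊢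
  exact ⟨hΓ ψ hψ.1 hχ, (depth_le_of_mem_subformulas hχ).trans hψ.2⟩

end SubformulaClosed

end GML

section Semantics

variable {A W W' : Type}

theorem gsat_iff_of_subformulaClosed {M : Kripke A W} {M' : Kripke A W'} {w : W} {w' : W'}
    {Γ : List (GML A)} (hΓ : GML.SubformulaClosed Γ) (hV : ∀ p, M.V p w ↔ M'.V p w')
    (hdia : ∀ k χ, .dia k χ ∈ Γ → (gsat M w (.dia k χ) ↔ gsat M' w' (.dia k χ))) :
    ∀ ψ ∈ Γ, gsat M w ψ ↔ gsat M' w' ψ := by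
  intro ψ hψ
  induction ψ with
  | atom p => exact hV p
  | neg φ ih => exact not_congr (ih (hΓ.neg_mem hψ))
  | and φ χ ihφ ihχ => exact and_congr (ihφ (hΓ.and_mem hψ).1) (ihχ (hΓ.and_mem hψ).2)
  | dia k χ => exact hdia k χ hψ

structure IsGeneratedEmbedding (M' : Kripke A W') (M : Kripke A W) (e : W' → W) : Prop where
  injective : Function.Injective e
  val_iff : ∀ p x, M.V p (e x) ↔ M'.V p x
  rel_iff : ∀ x y, M.R (e x) (e y) ↔ M'.R x y
  rel_mem_range : ∀ x z, M.R (e x) z → z ∈ Set.range e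

namespace IsGeneratedEmbedding

variable {M' : Kripke A W'} {M : Kripke A W} {e : W' → W}

theorem gsat_iff (he : IsGeneratedEmbedding M' M e) (ψ : GML A) (x : W') :
    gsat M (e x) ψ ↔ gsat M' x ψ := by
  induction ψ generalizing x with
  | atom p => exact he.val_iff p x
  | neg φ ih => exact not_congr (ih x)
  | and φ χ ihφ ihχ => exact and_congr (ihφ x) (ihχ x)
  | dia k χ ih =>
    constructor
    · rintro ⟨f, hf, hsucc⟩
      choose g hg using fun j ↦ he.rel_mem_range x _ (hsucc j).1
      refine ⟨g, fun i j hij ↦ hf (by rw [← hg i, ← hg j, hij]), fun j ↦ ?_⟩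
      rw [← he.rel_iff, ← ih, hg]
      exact hsucc j
    · rintro ⟨g, hg, hsucc⟩
      exact ⟨e ∘ g, he.injective.comp hg,
        fun j ↦ ⟨(he.rel_iff x (g j)).2 (hsucc j).1, (ih (g j)).2 (hsucc j).2⟩⟩

theorem reflTransGen (he : IsGeneratedEmbedding M' M e) {x y : W'}
    (h : Relation.ReflTransGen M'.R x y) : Relation.ReflTransGen M.R (e x) (e y) :=
  h.lift e fun a b ↦ (he.rel_iff a b).2

theorem transGen_iff (he : IsGeneratedEmbedding M' M e) {x : W'} {z : W} :
    Relation.TransGen M.R (e x) z ↔ ∃ y, e y = z ∧ Relation.TransGen M'.R x y := by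
  constructor
  · intro h
    induction h with
    | single h =>
      obtain ⟨y, rfl⟩ := he.rel_mem_range x _ h
      exact ⟨y, rfl, .single ((he.rel_iff x y).1 h)⟩
    | tail _ h ih =>
      obtain ⟨y, rfl, hxy⟩ := ih
      obtain ⟨y', rfl⟩ := he.rel_mem_range y _ h
      exact ⟨y', rfl, hxy.tail ((he.rel_iff y y').1 h)⟩
  · rintro ⟨y, rfl, h⟩
    exact h.lift e fun a b ↦ (he.rel_iff a b).2

end IsGeneratedEmbedding

theorem gsat_dia_iff_of_succ_eq_range {ι : Type} {M : Kripke A W} {w : W} {s : ι → W}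
    (hs : Function.Injective s) (hsucc : ∀ v, M.R w v ↔ v ∈ Set.range s) (k : ℕ) (χ : GML A) :
    gsat M w (.dia k χ) ↔
      ∃ f : Fin k → ι, Function.Injective f ∧ ∀ j, gsat M (s (f j)) χ := by
  constructor
  · rintro ⟨f, hf, hfsucc⟩
    choose g hg using fun j ↦ (hsucc _).1 (hfsucc j).1
    refine ⟨g, fun i j hij ↦ hf (by rw [← hg i, ← hg j, hij]), fun j ↦ ?_⟩
    rw [hg]
    exact (hfsucc j).2
  · rintro ⟨g, hg, hgsat⟩
    exact ⟨s ∘ g, hs.comp hg, fun j ↦ ⟨(hsucc _).2 ⟨g j, rfl⟩, hgsat j⟩⟩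

end Semantics

namespace Kripke

section Glue

variable {A ι : Type} {W : ι → Type} (M : ∀ i, Kripke A (W i)) (r : ∀ i, W i)

inductive GlueRel : Option (Σ i, W i) → Option (Σ i, W i) → Prop
  | root (i : ι) : GlueRel none (some ⟨i, r i⟩)
  | lift {i : ι} {x y : W i} : (M i).R x y → GlueRel (some ⟨i, x⟩) (some ⟨i, y⟩)

/-- The tree with root `none`, valuation `val` at the root, whose children are the roots `r i`
of the models `M i`. -/
def glue (val : A → Prop) : Kripke A (Option (Σ i, W i)) where
  R := GlueRel M r
  V p a := a.elim (val p) fun x ↦ (M x.1).V p x.2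

variable {M r} (val : A → Prop)

theorem isGeneratedEmbedding_glue (i : ι) :
    IsGeneratedEmbedding (M i) (glue M r val) fun x ↦ some ⟨i, x⟩ where
  injective _ _ h := eq_of_heq (Sigma.mk.inj_iff.mp (Option.some.inj h)).2
  val_iff _ _ := Iff.rfl
  rel_iff _ _ := ⟨fun | .lift h => h, .lift⟩
  rel_mem_range _ _ := fun | .lift (y := y) _ => ⟨y, rfl⟩

theorem glue_rel_none_iff (v : Option (Σ i, W i)) :
    (glue M r val).R none v ↔ v ∈ Set.range fun i ↦ some ⟨i, r i⟩ :=
  ⟨fun | .root i => ⟨i, rfl⟩, by rintro ⟨i, rfl⟩; exact .root i⟩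

theorem gsat_glue_none_dia (k : ℕ) (χ : GML A) :
    gsat (glue M r val) none (.dia k χ) ↔
      ∃ f : Fin k → ι, Function.Injective f ∧ ∀ j, gsat (M (f j)) (r (f j)) χ := by
  rw [gsat_dia_iff_of_succ_eq_range _ (glue_rel_none_iff val) k χ]
  · simp only [(isGeneratedEmbedding_glue val _).gsat_iff]
  · intro i j h
    exact (Sigma.mk.inj_iff.mp (Option.some.inj h)).1

theorem isTree_glue (hM : ∀ i, IsTree (M i) (r i)) : IsTree (glue M r val) none := by
  have he (i : ι) := isGeneratedEmbedding_glue (M := M) (r := r) val i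
  have no_rel_none : ∀ v, ¬ (glue M r val).R v none := fun _ h ↦ nomatch h
  refine ⟨?_, no_rel_none, ?_, ?_⟩
  · rintro (_ | ⟨i, x⟩)
    · exact .refl
    · exact .head (.root i) ((he i).reflTransGen ((hM i).1 x))
  · rintro u u' v (_ | h) h'
    · rcases h' with _ | h'
      · rfl
      · exact absurd h' ((hM _).2.1 _)
    · rcases h' with _ | h'
      · exact absurd h ((hM _).2.1 _)
      · rw [(hM _).2.2.1 _ _ _ h h']
  · rintro (_ | ⟨i, x⟩) h
    · obtain ⟨_, -, h⟩ := Relation.TransGen.tail'_iff.mp h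
      exact no_rel_none _ h
    · obtain ⟨y, hy, hxy⟩ := (he i).transGen_iff.mp h
      obtain rfl := (he i).injective hy
      exact (hM i).2.2.2 y hxy

end Glue

end Kripke

section Witnesses

variable {A W : Type}

noncomputable def diaWitnesses (M : Kripke A W) (w : W) : GML A → Set W
  | .dia k χ => ⋃ h : gsat M w (.dia k χ), Set.range h.choose
  | _ => ∅

variable {M : Kripke A W} {w : W}

theorem finite_diaWitnesses (ψ : GML A) : (diaWitnesses M w ψ).Finite := by
  cases ψ with
  | dia k χ => exact Set.finite_iUnion fun _ ↦ Set.finite_range _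
  | _ => exact Set.finite_empty

theorem rel_of_mem_diaWitnesses {ψ : GML A} {v : W} (hv : v ∈ diaWitnesses M w ψ) :
    M.R w v := by
  cases ψ with
  | dia k χ =>
    obtain ⟨h, j, rfl⟩ := Set.mem_iUnion.mp hv
    exact (h.choose_spec.2 j).1
  | _ => exact absurd hv (Set.notMem_empty v)

theorem exists_injective_diaWitnesses {k : ℕ} {χ : GML A} (h : gsat M w (.dia k χ)) :
    ∃ f : Fin k → W, Function.Injective f ∧
      ∀ j, f j ∈ diaWitnesses M w (.dia k χ) ∧ gsat M (f j) χ := by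
  refine ⟨h.choose, h.choose_spec.1, fun j ↦ ⟨?_, (h.choose_spec.2 j).2⟩⟩
  exact Set.mem_iUnion.mpr ⟨h, j, rfl⟩

theorem gsat_dia_iff_of_diaWitnesses_subset {C : Set W} (hC : ∀ v ∈ C, M.R w v) {k : ℕ}
    {χ : GML A} (hwit : diaWitnesses M w (.dia k χ) ⊆ C) :
    gsat M w (.dia k χ) ↔
      ∃ f : Fin k → C, Function.Injective f ∧ ∀ j, gsat M (f j) χ := by
  constructor
  · intro h
    obtain ⟨f, hf, hfC⟩ := exists_injective_diaWitnesses h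
    exact ⟨Set.codRestrict f C fun j ↦ hwit (hfC j).1,
      fun i j hij ↦ hf (congrArg Subtype.val hij), fun j ↦ (hfC j).2⟩
  · rintro ⟨f, hf, hfsat⟩
    exact ⟨Subtype.val ∘ f, Subtype.val_injective.comp hf,
      fun j ↦ ⟨hC _ (f j).2, hfsat j⟩⟩

end Witnesses

section FiniteTree

variable {A W : Type}

def HasFiniteTreeEquiv (Γ : List (GML A)) (M : Kripke A W) (w : W) : Prop :=
  ∃ (T : Type) (N : Kripke A T) (r : T),
    Finite T ∧ IsTree N r ∧ ∀ ψ ∈ Γ, gsat N r ψ ↔ gsat M w ψ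

theorem hasFiniteTreeEquiv_nil (M : Kripke A W) (w : W) : HasFiniteTreeEquiv [] M w :=
  ⟨_, Kripke.glue (ι := Empty) (W := Empty.elim) (fun i ↦ i.elim) (fun i ↦ i.elim)
    (fun p ↦ M.V p w), none, inferInstance, Kripke.isTree_glue _ fun i ↦ i.elim, by simp⟩

theorem HasFiniteTreeEquiv.of_successors {Γ Δ : List (GML A)} (hΓ : GML.SubformulaClosed Γ)
    (hΔ : ∀ k χ, .dia k χ ∈ Γ → χ ∈ Δ) {M : Kripke A W} {w : W}
    (hsucc : ∀ v, M.R w v → HasFiniteTreeEquiv Δ M v) : HasFiniteTreeEquiv Γ M w := by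
  set C : Set W := ⋃ ψ ∈ {ψ | ψ ∈ Γ}, diaWitnesses M w ψ
  have hCfin : C.Finite := Γ.finite_toSet.biUnion fun ψ _ ↦ finite_diaWitnesses ψ
  have hCsucc : ∀ v ∈ C, M.R w v := fun v hv ↦ by
    obtain ⟨ψ, -, hv⟩ := Set.mem_iUnion₂.mp hv
    exact rel_of_mem_diaWitnesses hv
  have : Finite C := hCfin.to_subtype
  choose T N r hT htree hagree using fun v : C ↦ hsucc v (hCsucc v v.2)
  refine ⟨_, Kripke.glue N r fun p ↦ M.V p w, none, inferInstance, Kripke.isTree_glue _ htree,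
    gsat_iff_of_subformulaClosed hΓ (fun _ ↦ Iff.rfl) fun k χ hkχ ↦ ?_⟩
  rw [Kripke.gsat_glue_none_dia, gsat_dia_iff_of_diaWitnesses_subset hCsucc
    (Set.subset_biUnion_of_mem (u := diaWitnesses M w) hkχ)]
  simp only [hagree _ χ (hΔ k χ hkχ)]

theorem hasFiniteTreeEquiv_of_depth_le (n : ℕ) {Γ : List (GML A)} (hΓ : GML.SubformulaClosed Γ)
    (hdepth : ∀ ψ ∈ Γ, ψ.depth ≤ n) (M : Kripke A W) (w : W) :
    HasFiniteTreeEquiv Γ M w := by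
  induction n generalizing Γ W with
  | zero =>
    refine .of_successors hΓ (Δ := []) (fun k χ hkχ ↦ ?_)
      fun v _ ↦ hasFiniteTreeEquiv_nil M v
    simpa [GML.depth] using hdepth _ hkχ
  | succ n ih =>
    refine .of_successors hΓ (Δ := Γ.filter fun ψ ↦ ψ.depth ≤ n) (fun k χ hkχ ↦ ?_)
      fun v _ ↦ ih (hΓ.filter_depth_le n) (by simp) M v
    simpa [GML.depth, hΓ.dia_mem hkχ] using hdepth _ hkχ

end FiniteTree

/-- GML has the finite tree model property: every satisfiable GML formula is
satisfied at the root of some finite tree model. -/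
theorem gml_finite_tree_model_property (φ : GML ℕ)
    (hsat : ∃ (W : Type) (M : Kripke ℕ W) (w : W), gsat M w φ) :
    ∃ (W : Type) (M : Kripke ℕ W) (r : W),
      Finite W ∧ IsTree M r ∧ gsat M r φ := by
  obtain ⟨W, M, w, hw⟩ := hsat
  obtain ⟨T, N, r, hT, htree, hagree⟩ :=
    hasFiniteTreeEquiv_of_depth_le φ.depth (GML.subformulaClosed_subformulas φ)
      (fun _ ↦ GML.depth_le_of_mem_subformulas) M w
  exact ⟨T, N, r, hT, htree, (hagree φ (GML.mem_subformulas_self φ)).2 hw⟩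
end

section
/- Formulas of the guarded fragment are invariant for rooted guarded bisimulations: if F is a rooted guarded bisimulation between (M, s₁,…,sₙ) and (N, t₁,…,tₙ), then for every GF-formula φ(x₁,…,xₙ), M ⊨ φ[s₁,…,sₙ] iff N ⊨ φ[t₁,…,tₙ]. -/
/-- A structure for a relational vocabulary: `L n` is the set of `n`-ary
relation symbols, interpreted by `I`. -/
structure RelStr (L : ℕ → Type) (M : Type) where
  I : ∀ n, L n → (Fin n → M) → Prop

/-- Formulas of the (raw) guarded-fragment syntax, with variables from `ℕ`.
`ex ys n g gv φ` stands for `∃ȳ (g(gv) ∧ φ)`. -/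
inductive GFml (L : ℕ → Type) : Type where
  | rel : (n : ℕ) → L n → (Fin n → ℕ) → GFml L
  | eq : ℕ → ℕ → GFml L
  | neg : GFml L → GFml L
  | or : GFml L → GFml L → GFml L
  | ex : List ℕ → (n : ℕ) → L n → (Fin n → ℕ) → GFml L → GFml L

/-- Free variables of a formula. -/
def free {L : ℕ → Type} : GFml L → Set ℕ
  | .rel _ _ v => Set.range v
  | .eq i j => {i, j}
  | .neg φ => free φ
  | .or φ ψ => free φ ∪ free ψ
  | .ex ys _ _ gv φ => (Set.range gv ∪ free φ) \ {x | x ∈ ys}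

/-- The guardedness condition: in every quantifier `∃ȳ (G ∧ φ)`, the guard `G`
contains all free variables of `φ`. -/
def IsGuarded {L : ℕ → Type} : GFml L → Prop
  | .rel _ _ _ => True
  | .eq _ _ => True
  | .neg φ => IsGuarded φ
  | .or φ ψ => IsGuarded φ ∧ IsGuarded ψ
  | .ex _ _ _ gv φ => IsGuarded φ ∧ free φ ⊆ Set.range gv

/-- Satisfaction under an assignment `s : ℕ → M`. -/
def gfsat {L : ℕ → Type} {M : Type} (St : RelStr L M) : (ℕ → M) → GFml L → Prop
  | s, .rel n r v => St.I n r (fun i => s (v i))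
  | s, .eq i j => s i = s j
  | s, .neg φ => ¬ gfsat St s φ
  | s, .or φ ψ => gfsat St s φ ∨ gfsat St s ψ
  | s, .ex ys n g gv φ => ∃ s' : ℕ → M, (∀ x, x ∉ ys → s' x = s x) ∧
      St.I n g (fun i => s' (gv i)) ∧ gfsat St s' φ

/-- A set of elements is guarded if some tuple in some atomic relation contains
all of them. -/
def GuardedSet {L : ℕ → Type} {M : Type} (St : RelStr L M) (S : Set M) : Prop :=
  ∃ n : ℕ, ∃ r : L n, ∃ t : Fin n → M, St.I n r t ∧ S ⊆ Set.range t

/-- `f` is a finite partial isomorphism between `St` and `St'`. -/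
def PartialIso {L : ℕ → Type} {M N : Type} (St : RelStr L M) (St' : RelStr L N)
    (f : Set (M × N)) : Prop :=
  f.Finite ∧
  (∀ p ∈ f, ∀ q ∈ f, p.1 = q.1 ↔ p.2 = q.2) ∧
  (∀ n (r : L n) (t : Fin n → M × N), (∀ i, t i ∈ f) →
    (St.I n r (fun i => (t i).1) ↔ St'.I n r (fun i => (t i).2)))

/-- `F` is a guarded bisimulation between `St` and `St'`: a nonempty set of
finite partial isomorphisms satisfying the guarded back-and-forth conditions. -/
def GuardedBisim {L : ℕ → Type} {M N : Type} (St : RelStr L M) (St' : RelStr L N)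
    (F : Set (Set (M × N))) : Prop :=
  F.Nonempty ∧
  (∀ f ∈ F, PartialIso St St' f) ∧
  (∀ f ∈ F, ∀ Z : Set M, GuardedSet St Z →
    ∃ g ∈ F, {a | ∃ b, (a, b) ∈ g} = Z ∧ ∀ p ∈ f, p.1 ∈ Z → p ∈ g) ∧
  (∀ f ∈ F, ∀ Ws : Set N, GuardedSet St' Ws →
    ∃ g ∈ F, {b | ∃ a, (a, b) ∈ g} = Ws ∧ ∀ p ∈ f, p.2 ∈ Ws → p ∈ g)

/-!
Induction on the formula, for all `f ∈ F` and all pairs of assignments that `f` matches on the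
free variables. At a guarded quantifier the witness assignment makes the guard's values a guarded
set, so the forth condition extends `f` to some `g ∈ F` covering them; since the guard contains
every free variable of the body, `g` matches the new assignments on those, and the induction
hypothesis applies. The back condition is the forth condition of the swapped bisimulation.
-/

namespace PartialIso

variable {L : ℕ → Type} {M N : Type} {St : RelStr L M} {St' : RelStr L N} {f : Set (M × N)}

theorem rel_iff (hf : PartialIso St St' f) {n : ℕ} (r : L n) {u : Fin n → M} {w : Fin n → N}
    (h : ∀ i, (u i, w i) ∈ f) : St.I n r u ↔ St'.I n r w :=
  hf.2.2 n r (fun i => (u i, w i)) h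

theorem symm (hf : PartialIso St St' f) : PartialIso St' St (Prod.swap ⁻¹' f) :=
  ⟨hf.1.preimage Prod.swap_injective.injOn, fun _ hp _ hq => (hf.2.1 _ hp _ hq).symm,
    fun n r t ht => (hf.2.2 n r (Prod.swap ∘ t) ht).symm⟩

end PartialIso

theorem guardedSet_image_range {L : ℕ → Type} {M : Type} {St : RelStr L M} {n : ℕ} {r : L n}
    {c : ℕ → M} {v : Fin n → ℕ} (h : St.I n r (c ∘ v)) : GuardedSet St (c '' Set.range v) :=
  ⟨n, r, _, h, (Set.range_comp c v).ge⟩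

namespace GuardedBisim

variable {L : ℕ → Type} {M N : Type} {St : RelStr L M} {St' : RelStr L N}
  {F : Set (Set (M × N))}

theorem symm (hF : GuardedBisim St St' F) :
    GuardedBisim St' St (Set.preimage Prod.swap '' F) := by
  obtain ⟨⟨f₀, hf₀⟩, hiso, hforth, hback⟩ := hF
  refine ⟨⟨_, f₀, hf₀, rfl⟩, ?_, ?_, ?_⟩
  · rintro _ ⟨f, hf, rfl⟩
    exact (hiso f hf).symm
  · rintro _ ⟨f, hf, rfl⟩ Z hZ
    obtain ⟨g, hg, hran, hagree⟩ := hback f hf Z hZ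
    exact ⟨_, ⟨g, hg, rfl⟩, hran, fun p hp => hagree p.swap hp⟩
  · rintro _ ⟨f, hf, rfl⟩ Z hZ
    obtain ⟨g, hg, hdom, hagree⟩ := hforth f hf Z hZ
    exact ⟨_, ⟨g, hg, rfl⟩, hdom, fun p hp => hagree p.swap hp⟩

/-- The forth step at a quantifier `∃ Y (G ∧ φ)` whose guard `G` has the variables `V`. -/
theorem exists_forth (hF : GuardedBisim St St' F) {f : Set (M × N)} (hf : f ∈ F)
    {V Y : Set ℕ} {a a' : ℕ → M} {b : ℕ → N} (hab : ∀ x ∈ V \ Y, (a x, b x) ∈ f)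
    (ha' : ∀ x ∉ Y, a' x = a x) (hguard : GuardedSet St (a' '' V)) :
    ∃ g ∈ F, ∃ b' : ℕ → N, (∀ x ∉ Y, b' x = b x) ∧ ∀ x ∈ V, (a' x, b' x) ∈ g := by
  classical
  obtain ⟨g, hg, hdom, hagree⟩ := hF.2.2.1 f hf _ hguard
  have hpick : ∀ x ∈ V, ∃ c, (a' x, c) ∈ g := fun x hx =>
    (hdom.ge (Set.mem_image_of_mem a' hx) : a' x ∈ {a | ∃ b, (a, b) ∈ g})
  have : Nonempty N := ⟨b 0⟩
  choose! c hc using hpick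
  refine ⟨g, hg, fun x => if x ∈ Y then c x else b x, fun x hx => if_neg hx, fun x hx => ?_⟩
  by_cases hY : x ∈ Y
  · simpa only [if_pos hY] using hc x hx
  · simp only [if_neg hY]
    have hdom_x : a x ∈ a' '' V := ha' x hY ▸ Set.mem_image_of_mem a' hx
    exact ha' x hY ▸ hagree _ (hab x ⟨hx, hY⟩) hdom_x

theorem exists_back (hF : GuardedBisim St St' F) {f : Set (M × N)} (hf : f ∈ F)
    {V Y : Set ℕ} {a : ℕ → M} {b b' : ℕ → N} (hab : ∀ x ∈ V \ Y, (a x, b x) ∈ f)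
    (hb' : ∀ x ∉ Y, b' x = b x) (hguard : GuardedSet St' (b' '' V)) :
    ∃ g ∈ F, ∃ a' : ℕ → M, (∀ x ∉ Y, a' x = a x) ∧ ∀ x ∈ V, (a' x, b' x) ∈ g := by
  obtain ⟨_, ⟨g, hg, rfl⟩, a', ha', hmem⟩ := hF.symm.exists_forth ⟨f, hf, rfl⟩ hab hb' hguard
  exact ⟨g, hg, a', ha', hmem⟩

theorem gfsat_iff (hF : GuardedBisim St St' F) {φ : GFml L} (hφ : IsGuarded φ)
    {f : Set (M × N)} (hf : f ∈ F) {a : ℕ → M} {b : ℕ → N}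
    (hab : ∀ x ∈ free φ, (a x, b x) ∈ f) : gfsat St a φ ↔ gfsat St' b φ := by
  induction φ generalizing f a b with
  | rel n r v => exact (hF.2.1 f hf).rel_iff r fun i => hab _ ⟨i, rfl⟩
  | eq i j => exact (hF.2.1 f hf).2.1 _ (hab i (.inl rfl)) _ (hab j (.inr rfl))
  | neg φ ih => exact not_congr (ih hφ hf hab)
  | or φ ψ ihφ ihψ =>
    exact or_congr (ihφ hφ.1 hf fun x hx => hab x (.inl hx))
      (ihψ hφ.2 hf fun x hx => hab x (.inr hx))
  | ex ys n r v φ ih =>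
    have hfree : ∀ x ∈ Set.range v \ {x | x ∈ ys}, (a x, b x) ∈ f :=
      fun x hx => hab x ⟨.inl hx.1, hx.2⟩
    constructor
    · rintro ⟨a', ha', hguard, hsat⟩
      obtain ⟨g, hg, b', hb', hmem⟩ :=
        hF.exists_forth hf hfree ha' (guardedSet_image_range hguard)
      exact ⟨b', hb', ((hF.2.1 g hg).rel_iff r fun i => hmem _ ⟨i, rfl⟩).1 hguard,
        (ih hφ.1 hg fun x hx => hmem x (hφ.2 hx)).1 hsat⟩
    · rintro ⟨b', hb', hguard, hsat⟩
      obtain ⟨g, hg, a', ha', hmem⟩ :=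
        hF.exists_back hf hfree hb' (guardedSet_image_range hguard)
      exact ⟨a', ha', ((hF.2.1 g hg).rel_iff r fun i => hmem _ ⟨i, rfl⟩).2 hguard,
        (ih hφ.1 hg fun x hx => hmem x (hφ.2 hx)).2 hsat⟩

end GuardedBisim

/-- GF-formulas are invariant for rooted guarded bisimulations: if the map
`sᵢ ↦ tᵢ` belongs to a guarded bisimulation `F`, then any guarded formula with
free variables among `x₀, …, x_{m-1}` has the same truth value under the
assignments `s̄` and `t̄`. -/
theorem guarded_bisimulation_invariance {L : ℕ → Type} {M N : Type}
    (St : RelStr L M) (St' : RelStr L N) (F : Set (Set (M × N)))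
    (hF : GuardedBisim St St' F)
    (m : ℕ) (s : Fin m → M) (t : Fin m → N)
    (hroot : (Set.range fun i => (s i, t i)) ∈ F)
    (φ : GFml L) (hg : IsGuarded φ) (hfv : free φ ⊆ {x | x < m})
    (a : ℕ → M) (b : ℕ → N)
    (ha : ∀ i : Fin m, a i = s i) (hb : ∀ i : Fin m, b i = t i) :
    gfsat St a φ ↔ gfsat St' b φ := by
  refine hF.gfsat_iff hg hroot fun x hx => ⟨⟨x, hfv hx⟩, ?_⟩
  exact Prod.ext (ha ⟨x, hfv hx⟩).symm (hb ⟨x, hfv hx⟩).symm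
end
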